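/- arXiv:2310.11705 — 2 statements merged into one kernel-verified Lean document; each statement's English description precedes it below -/
import Mathlib

section
/- Let F be a connected weighted graph on n vertices with weight function w : E(F) → [0,∞), let Δ > 0 and K ∈ ℕ. Then MST(F) ≤ Δ · ∑_{i=0}^{K−1} dr(F^{≤ iΔ/n}) + ∫_{KΔ/n}^∞ (cc(F^{≤x}) − 1) dx. -/
open MeasureTheory

/-- The weight of a minimum spanning tree of the graph `G` with edge weights `w`. -/
noncomputable def MSTweight {V : Type*} [Fintype V] (G : SimpleGraph V) (w : Sym2 V → ℝ) : ℝ :=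
  sInf {x : ℝ | ∃ T : SimpleGraph V, T ≤ G ∧ T.IsTree ∧ x = ∑ᶠ e ∈ T.edgeSet, w e}

/-- The spanning subgraph `F^{≤x}` of `F` consisting of the edges of weight at most `x`. -/
def levelGraph {V : Type*} (F : SimpleGraph V) (w : Sym2 V → ℝ) (x : ℝ) : SimpleGraph V where
  Adj a b := F.Adj a b ∧ w s(a, b) ≤ x
  symm := by
    constructor
    intro a b h
    exact ⟨h.1.symm, by rw [Sym2.eq_swap]; exact h.2⟩
  loopless := ⟨fun a h => F.loopless.irrefl a h.1⟩

/-! Deleting a heaviest edge of a cycle, repeatedly, turns `F` into a spanning tree `T` whose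
level graphs `T^{≤x}` have the same components as `F^{≤x}` for every `x`. A forest on `n`
vertices with `c` components has `n - c` edges, so exactly `cc(F^{≤x}) - 1` edges of `T` are
heavier than `x`, and the layer-cake formula gives `w(T) = ∫_0^∞ (cc(F^{≤x}) - 1) dx`. On
`[0, KΔ/n]` the antitone integrand is bounded by its left Riemann sum with step `Δ/n`. -/

namespace SimpleGraph

variable {V : Type*} {G H : SimpleGraph V} {u v a b : V}

lemma Reachable.deleteEdges_or (h : G.Reachable a b) :
    (G.deleteEdges {s(u, v)}).Reachable a b ∨ (G.deleteEdges {s(u, v)}).Reachable a u ∨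
      (G.deleteEdges {s(u, v)}).Reachable a v := by
  obtain ⟨p⟩ := h
  induction p with
  | nil => exact .inl .rfl
  | @cons a c b hac _ ih =>
    by_cases he : s(a, c) = s(u, v)
    · rcases Sym2.eq_iff.mp he with ⟨rfl, -⟩ | ⟨rfl, -⟩
      exacts [.inr (.inl .rfl), .inr (.inr .rfl)]
    · have hac' : (G.deleteEdges {s(u, v)}).Adj a c := by simpa [hac] using he
      exact ih.imp hac'.reachable.trans (Or.imp hac'.reachable.trans hac'.reachable.trans)

lemma Reachable.deleteEdges_of_reachable (h : G.Reachable a b)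
    (huv : (G.deleteEdges {s(u, v)}).Reachable u v) : (G.deleteEdges {s(u, v)}).Reachable a b := by
  have toU {c d : V} (hcd : G.Reachable c d) :
      (G.deleteEdges {s(u, v)}).Reachable c d ∨ (G.deleteEdges {s(u, v)}).Reachable c u := by
    rcases hcd.deleteEdges_or with h | h | h
    exacts [.inl h, .inr h, .inr (h.trans huv.symm)]
  rcases toU h with hab | hau
  · exact hab
  rcases toU h.symm with hba | hbu
  exacts [hba.symm, hau.trans hbu.symm]

lemma card_connectedComponent_deleteEdges_of_isBridge [Finite V] (hadj : G.Adj u v)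
    (hbr : G.IsBridge s(u, v)) :
    Nat.card (G.deleteEdges {s(u, v)}).ConnectedComponent = Nat.card G.ConnectedComponent + 1 := by
  classical
  set G' := G.deleteEdges {s(u, v)}
  have hle : G' ≤ G := deleteEdges_le _
  have huv : G'.connectedComponentMk u ≠ G'.connectedComponentMk v :=
    fun h => hbr (ConnectedComponent.exact h)
  have hcomp {a b : V} (hab : G.Reachable a b)
      (ha : G'.connectedComponentMk a ≠ G'.connectedComponentMk v)
      (hb : G'.connectedComponentMk b ≠ G'.connectedComponentMk v) :
      G'.connectedComponentMk a = G'.connectedComponentMk b := by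
    rcases hab.deleteEdges_or (u := u) (v := v) with h | hau | hav
    · exact ConnectedComponent.sound h
    · rcases hab.symm.deleteEdges_or (u := u) (v := v) with h | hbu | hbv
      · exact (ConnectedComponent.sound h).symm
      · exact (ConnectedComponent.sound hau).trans (ConnectedComponent.sound hbu).symm
      · exact (hb (ConnectedComponent.sound hbv)).elim
    · exact (ha (ConnectedComponent.sound hav)).elim
  -- `G` merges the components of `u` and `v` in `G'` and leaves all others unchanged
  rw [← Finite.card_option]
  refine Nat.card_eq_of_bijective
    (fun d => if d = G'.connectedComponentMk v then none else some (d.map (Hom.ofLE hle)))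
    ⟨?_, ?_⟩
  · refine ConnectedComponent.ind₂ fun a b hab => ?_
    dsimp only at hab
    split_ifs at hab with ha hb hb
    · exact ha.trans hb.symm
    · exact hcomp (ConnectedComponent.exact (Option.some_injective _ hab)) ha hb
  · rintro (_ | c)
    · exact ⟨G'.connectedComponentMk v, if_pos rfl⟩
    · refine c.ind fun a => ?_
      by_cases ha : G'.connectedComponentMk a = G'.connectedComponentMk v
      · refine ⟨G'.connectedComponentMk u, ?_⟩
        simp only [if_neg huv, ConnectedComponent.map_mk, Hom.ofLE_apply, Option.some_inj]
        exact ConnectedComponent.sound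
          (hadj.reachable.trans ((ConnectedComponent.exact ha).mono hle).symm)
      · exact ⟨G'.connectedComponentMk a, by simp [ha]⟩

lemma card_connectedComponent_bot :
    Nat.card (⊥ : SimpleGraph V).ConnectedComponent = Nat.card V :=
  (Nat.card_eq_of_bijective _ ⟨fun _ _ h => reachable_bot.mp (ConnectedComponent.exact h),
    fun c => c.ind fun v => ⟨v, rfl⟩⟩).symm

lemma IsAcyclic.card_connectedComponent_add_ncard_edgeSet [Finite V] (hG : G.IsAcyclic) :
    Nat.card G.ConnectedComponent + G.edgeSet.ncard = Nat.card V := by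
  induction hn : G.edgeSet.ncard generalizing G with
  | zero =>
    rw [Set.ncard_eq_zero, edgeSet_eq_empty] at hn
    rw [hn, card_connectedComponent_bot, add_zero]
  | succ n ih =>
    obtain ⟨e, he⟩ := Set.nonempty_of_ncard_ne_zero (hn.trans_ne n.succ_ne_zero)
    induction e with | h u v =>
    have hadj : G.Adj u v := he
    have hdel : (G.deleteEdges {s(u, v)}).edgeSet.ncard = n := by
      rw [edgeSet_deleteEdges, Set.ncard_sdiff_singleton_of_mem he, hn, Nat.add_sub_cancel]
    rw [← ih (hG.anti (deleteEdges_le _)) hdel,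
      card_connectedComponent_deleteEdges_of_isBridge hadj
        (isAcyclic_iff_forall_adj_isBridge.mp hG hadj)]
    omega

lemma Connected.card_connectedComponent (hG : G.Connected) :
    Nat.card G.ConnectedComponent = 1 :=
  Nat.card_eq_one_iff_unique.mpr
    ⟨hG.preconnected.subsingleton_connectedComponent,
      ⟨G.connectedComponentMk hG.nonempty.some⟩⟩

lemma card_connectedComponent_eq_of_le (hle : G ≤ H)
    (h : ∀ a b, H.Reachable a b → G.Reachable a b) :
    Nat.card G.ConnectedComponent = Nat.card H.ConnectedComponent :=
  Nat.card_eq_of_bijective _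
    ⟨ConnectedComponent.ind₂ fun _ _ hab =>
      ConnectedComponent.sound (h _ _ (ConnectedComponent.exact hab)),
      ConnectedComponent.surjective_map_ofLE hle⟩

end SimpleGraph

section levelGraph

open SimpleGraph Finset

variable {V : Type*} {F T : SimpleGraph V} {w : Sym2 V → ℝ} {x : ℝ}

lemma mem_edgeSet_levelGraph {e : Sym2 V} :
    e ∈ (levelGraph F w x).edgeSet ↔ e ∈ F.edgeSet ∧ w e ≤ x := by
  induction e with | h a b => exact Iff.rfl

lemma levelGraph_le : levelGraph F w x ≤ F := fun _ _ h => h.1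

lemma levelGraph_mono {y : ℝ} (h : x ≤ y) : levelGraph F w x ≤ levelGraph F w y :=
  fun _ _ hab => ⟨hab.1, hab.2.trans h⟩

lemma levelGraph_mono_left (h : T ≤ F) : levelGraph T w x ≤ levelGraph F w x :=
  fun _ _ hab => ⟨h hab.1, hab.2⟩

lemma antitone_card_connectedComponent_levelGraph [Finite V] :
    Antitone fun x => Nat.card (levelGraph F w x).ConnectedComponent :=
  fun _ _ h => ConnectedComponent.card_le_card_of_le (levelGraph_mono h)

lemma levelGraph_deleteEdges (s : Set (Sym2 V)) :
    levelGraph (F.deleteEdges s) w x = (levelGraph F w x).deleteEdges s := by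
  ext a b
  simp only [levelGraph, deleteEdges_adj]
  exact and_right_comm

lemma reachable_levelGraph_deleteEdges_of_isCycle {u v a b r : V} {c : F.Walk r r}
    (hc : c.IsCycle) (he : s(u, v) ∈ c.edges) (hmax : ∀ e ∈ c.edges, w e ≤ w s(u, v))
    (hab : (levelGraph F w x).Reachable a b) :
    (levelGraph (F.deleteEdges {s(u, v)}) w x).Reachable a b := by
  rw [levelGraph_deleteEdges]
  by_cases hx : w s(u, v) ≤ x
  · have hsub : ∀ e ∈ c.edges, e ∈ (levelGraph F w x).edgeSet := fun e he' =>
      mem_edgeSet_levelGraph.mpr ⟨c.edges_subset_edgeSet he', (hmax e he').trans hx⟩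
    have huv := (adj_and_reachable_delete_edges_iff_exists_cycle.mpr
      ⟨r, c.transfer _ hsub, hc.transfer hsub, by rwa [Walk.edges_transfer]⟩).2
    exact hab.deleteEdges_of_reachable huv
  · rwa [deleteEdges_eq_self.mpr]
    exact Set.disjoint_singleton_right.mpr fun h => hx (mem_edgeSet_levelGraph.mp h).2

lemma SimpleGraph.Connected.exists_isTree_le_reachable_levelGraph [Finite V] (hF : F.Connected)
    (w : Sym2 V → ℝ) : ∃ T ≤ F, T.IsTree ∧
      ∀ x a b, (levelGraph F w x).Reachable a b → (levelGraph T w x).Reachable a b := by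
  induction hn : F.edgeSet.ncard using Nat.strong_induction_on generalizing F with | _ n ih =>
  by_cases hac : F.IsAcyclic
  · exact ⟨F, le_rfl, ⟨hF, hac⟩, fun _ _ _ => id⟩
  obtain ⟨r, c, hc⟩ : ∃ (r : V) (c : F.Walk r r), c.IsCycle := by
    simpa [IsAcyclic] using hac
  classical
  obtain ⟨e, he, hmax⟩ := c.edges.toFinset.exists_max_image w
    (List.toFinset_nonempty_iff _ |>.mpr (Walk.edges_eq_nil.not.mpr hc.not_nil))
  rw [List.mem_toFinset] at he
  induction e with | h u v =>
  have heF : s(u, v) ∈ F.edgeSet := c.edges_subset_edgeSet he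
  have hF' : (F.deleteEdges {s(u, v)}).Connected :=
    hF.connected_delete_edge_of_not_isBridge fun hbr => hbr.notMem_edges_of_isCycle hc he
  have hn' : (F.deleteEdges {s(u, v)}).edgeSet.ncard < n := by
    rw [edgeSet_deleteEdges, ← hn]
    exact Set.ncard_sdiff_singleton_lt_of_mem heF
  obtain ⟨T, hTF, hT, hlevel⟩ := ih _ hn' hF' rfl
  refine ⟨T, hTF.trans (deleteEdges_le _), hT, fun x a b hab => hlevel x a b ?_⟩
  exact reachable_levelGraph_deleteEdges_of_isCycle hc he
    (fun e he' => hmax e (List.mem_toFinset.mpr he')) hab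

lemma SimpleGraph.IsAcyclic.card_connectedComponent_levelGraph [Finite V] [Fintype T.edgeSet]
    (hT : T.IsAcyclic) (w : Sym2 V → ℝ) (x : ℝ) :
    Nat.card (levelGraph T w x).ConnectedComponent =
      Nat.card T.ConnectedComponent + #{e ∈ T.edgeFinset | x < w e} := by
  classical
  have hlevel : (levelGraph T w x).edgeSet = ↑{e ∈ T.edgeFinset | w e ≤ x} := by
    ext e
    simp [mem_edgeSet_levelGraph]
  have hsplit := Finset.card_filter_add_card_filter_not (s := T.edgeFinset) (fun e => w e ≤ x)
  have hT' := hT.card_connectedComponent_add_ncard_edgeSet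
  have hL := (hT.anti (levelGraph_le (w := w) (x := x))).card_connectedComponent_add_ncard_edgeSet
  simp only [not_le] at hsplit
  rw [hlevel, Set.ncard_coe_finset] at hL
  rw [← coe_edgeFinset, Set.ncard_coe_finset] at hT'
  omega

end levelGraph

lemma MSTweight_le_of_isTree {V : Type*} [Fintype V] {G T : SimpleGraph V} {w : Sym2 V → ℝ}
    (hw : ∀ e ∈ G.edgeSet, 0 ≤ w e) (hTG : T ≤ G) (hT : T.IsTree) :
    MSTweight G w ≤ ∑ᶠ e ∈ T.edgeSet, w e :=
  csInf_le ⟨0, by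
    rintro _ ⟨T', hT'G, -, rfl⟩
    exact finsum_nonneg fun e => finsum_nonneg fun he => hw e (SimpleGraph.edgeSet_mono hT'G he)⟩
    ⟨T, hTG, hT, rfl⟩

section Integrals

open Set Finset

variable {ι : Type*} (s : Finset ι) (w : ι → ℝ)

lemma natCast_card_filter_lt_eq_sum_indicator (x : ℝ) :
    (#{e ∈ s | x < w e} : ℝ) = ∑ e ∈ s, (Iio (w e)).indicator 1 x := by
  classical
  rw [natCast_card_filter]
  simp [indicator_apply]

lemma integrableOn_Ioi_indicator_Iio (a : ℝ) :
    IntegrableOn ((Iio a).indicator (1 : ℝ → ℝ)) (Ioi 0) := by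
  rw [IntegrableOn, integrable_indicator_iff measurableSet_Iio, IntegrableOn,
    Measure.restrict_restrict measurableSet_Iio, Iio_inter_Ioi]
  exact integrableOn_const measure_Ioo_lt_top.ne

lemma integrableOn_Ioi_card_filter_lt :
    IntegrableOn (fun x => (#{e ∈ s | x < w e} : ℝ)) (Ioi 0) := by
  simp_rw [natCast_card_filter_lt_eq_sum_indicator]
  exact integrable_finsetSum s fun e _ => integrableOn_Ioi_indicator_Iio (w e)

lemma integral_Ioi_card_filter_lt (hw : ∀ e ∈ s, 0 ≤ w e) :
    ∫ x in Ioi 0, (#{e ∈ s | x < w e} : ℝ) = ∑ e ∈ s, w e := by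
  rw [integral_congr_ae (ae_of_all _ (natCast_card_filter_lt_eq_sum_indicator s w)),
    integral_finsetSum s fun e _ => integrableOn_Ioi_indicator_Iio (w e)]
  refine Finset.sum_congr rfl fun e he => ?_
  rw [integral_indicator measurableSet_Iio, Measure.restrict_restrict measurableSet_Iio,
    Iio_inter_Ioi]
  simp [hw e he]

end Integrals

lemma AntitoneOn.intervalIntegral_le_mul_sum {f : ℝ → ℝ} {δ : ℝ} (hδ : 0 < δ) {K : ℕ}
    (hf : AntitoneOn f (Set.Icc 0 (K * δ))) :
    ∫ x in 0..K * δ, f x ≤ δ * ∑ i ∈ Finset.range K, f (i * δ) := by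
  have hscaled : AntitoneOn (fun t => f (t * δ)) (Set.Icc 0 (0 + K)) := by
    rw [zero_add]
    exact hf.comp_MonotoneOn (fun a _ b _ hab => mul_le_mul_of_nonneg_right hab hδ.le)
      fun t ht => ⟨mul_nonneg ht.1 hδ.le, mul_le_mul_of_nonneg_right ht.2 hδ.le⟩
  have h := hscaled.integral_le_sum
  simp only [zero_add, intervalIntegral.integral_comp_mul_right _ hδ.ne', zero_mul,
    smul_eq_mul] at h
  rwa [inv_mul_le_iff₀ hδ] at h

open SimpleGraph Finset Set in
/-- Riemann-sum upper bound for the minimum spanning tree weight: for a connected `n`-vertex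
weighted graph `F`, any `Δ > 0` and any `K ∈ ℕ`,
`MST(F) ≤ Δ·∑_{i=0}^{K−1} dr(F^{≤ iΔ/n}) + ∫_{KΔ/n}^∞ (cc(F^{≤x}) − 1) dx`,
where `cc` is the number of connected components and `dr` the disconnectedness ratio
(`cc` divided by the number `n` of vertices). -/
theorem mst_le_riemann_sum {V : Type*} [Fintype V]
    (F : SimpleGraph V) (hconn : F.Connected)
    (w : Sym2 V → ℝ) (hw : ∀ e ∈ F.edgeSet, 0 ≤ w e)
    (Δ : ℝ) (hΔ : 0 < Δ) (K : ℕ) :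
    MSTweight F w ≤
      Δ * ∑ i ∈ Finset.range K,
          ((Nat.card (levelGraph F w ((i : ℝ) * Δ / (Fintype.card V : ℝ))).ConnectedComponent : ℝ)
            / (Fintype.card V : ℝ))
      + ∫ x in Set.Ioi ((K : ℝ) * Δ / (Fintype.card V : ℝ)),
          ((Nat.card (levelGraph F w x).ConnectedComponent : ℝ) - 1) := by
  classical
  obtain ⟨T, hTF, hT, hlevel⟩ := hconn.exists_isTree_le_reachable_levelGraph w
  set n : ℝ := (Fintype.card V : ℝ)
  set cc : ℝ → ℝ := fun x => Nat.card (levelGraph F w x).ConnectedComponent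
  have : Nonempty V := hconn.nonempty
  have hδ : 0 < Δ / n := by positivity
  have hcc (x : ℝ) : cc x - 1 = #{e ∈ T.edgeFinset | x < w e} := by
    simp only [cc, ← card_connectedComponent_eq_of_le (levelGraph_mono_left hTF) (hlevel x),
      hT.isAcyclic.card_connectedComponent_levelGraph, hT.connected.card_connectedComponent]
    push_cast
    ring
  have hint : IntegrableOn (fun x => cc x - 1) (Ioi 0) := by
    simpa only [hcc] using integrableOn_Ioi_card_filter_lt T.edgeFinset w
  have hanti : Antitone fun x => cc x - 1 := fun x y h =>
    sub_le_sub_right (Nat.cast_le.mpr (antitone_card_connectedComponent_levelGraph h)) 1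
  simp only [mul_div_assoc]
  calc MSTweight F w ≤ ∑ e ∈ T.edgeFinset, w e := by
        simpa only [← coe_edgeFinset, finsum_mem_coe_finset] using
          MSTweight_le_of_isTree hw hTF hT
    _ = ∫ x in Ioi 0, (cc x - 1) := by
        rw [← integral_Ioi_card_filter_lt _ w
          fun e he => hw e (edgeSet_mono hTF (mem_edgeFinset.mp he))]
        exact integral_congr_ae (ae_of_all _ fun x => (hcc x).symm)
    _ = (∫ x in 0..K * (Δ / n), (cc x - 1)) + ∫ x in Ioi (K * (Δ / n)), (cc x - 1) :=
        (intervalIntegral.integral_interval_add_Ioi hint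
          (hint.mono_set (Ioi_subset_Ioi (by positivity)))).symm
    _ ≤ Δ / n * ∑ i ∈ range K, (cc (i * (Δ / n)) - 1) +
          ∫ x in Ioi (K * (Δ / n)), (cc x - 1) := by
        gcongr
        exact hanti.antitoneOn _ |>.intervalIntegral_le_mul_sum hδ
    _ ≤ Δ / n * ∑ i ∈ range K, cc (i * (Δ / n)) +
          ∫ x in Ioi (K * (Δ / n)), (cc x - 1) := by
        gcongr
        exact sub_le_self _ zero_le_one
    _ = _ := by
        rw [Finset.mul_sum, Finset.mul_sum]
        congr! 2 with i
        ring
end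

section
/- Let α > 0. Let F and H be two graphs on the same vertex set V with |V| = n and n > 500/α, and suppose H is α-robust. Let F' be the random graph obtained from F by adding, independently, each edge of E(H)∖E(F) with probability 12/(αn). Then with probability at least 1 − n^{−4}, one has cc(F') ≤ 0.6·cc(F) + n^{4/5}. -/
/-!
Let `G = F ⊔ F''` where `F''` is the set of sampled edges. Each component of `G` is a union of
components of `F`, so every component of `G` that is not already a component of `F` swallows at
least two of them: `2·cc(G) ≤ cc(F) + #{components of F closed in G}`. Since at most one
component has more than `n/2` vertices, `cc(G) > 0.6·cc(F) + n^{4/5}` forces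
`t ≥ 0.2·cc(F) + 2n^{4/5} - 1` closed components of `F` with at most `n/2` vertices each.
By robustness each of them has at least `αn/2` edges of `H` leaving it (none in `F`), so `t` of
them have at least `tαn/4` such edges, all of which must be missed: probability at most
`(1 - p)^{tαn/4} ≤ e^{-3t}`. A union bound over the `C(cc(F), t) ≤ (5e)^t` choices leaves
`(5/e²)^t ≤ n^{-4}`.
-/

open MeasureTheory

noncomputable def bernoulliMeasure (p : ℝ) : Measure Bool :=
  (ENNReal.ofReal p) • Measure.dirac true + (1 - ENNReal.ofReal p) • Measure.dirac false

/-- The crossing edges of `G` between `U` and its complement, recorded as ordered pairs with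
first coordinate in `U`; each crossing edge corresponds to exactly one such pair. -/
def crossPairs {V : Type*} (G : SimpleGraph V) (U : Set V) : Set (V × V) :=
  {p : V × V | p.1 ∈ U ∧ p.2 ∉ U ∧ G.Adj p.1 p.2}

def IsRobust {V : Type*} [Fintype V] (ρ : ℝ) (G : SimpleGraph V) : Prop :=
  ∀ U : Set V,
    ρ * (Nat.card U : ℝ) * ((Fintype.card V : ℝ) - (Nat.card U : ℝ))
      ≤ (Nat.card (crossPairs G U) : ℝ)

def selectGraph {V : Type*} (S : Set (Sym2 V)) (ω : Sym2 V → Bool) : SimpleGraph V where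
  Adj a b := a ≠ b ∧ s(a, b) ∈ S ∧ ω s(a, b) = true
  symm := by
    constructor
    intro a b h
    refine ⟨h.1.symm, ?_, ?_⟩ <;> rw [Sym2.eq_swap]
    exacts [h.2.1, h.2.2]
  loopless := ⟨fun a h => h.1 rfl⟩

open Finset

theorem Function.Surjective.two_mul_card_le {α β : Type*} [Finite α] {f : α → β}
    (hf : f.Surjective) :
    2 * Nat.card β ≤ Nat.card α + Nat.card {a // ∀ a', f a' = f a → a' = a} := by
  classical
  have := Fintype.ofFinite α
  have := Fintype.ofSurjective f hf
  set U : Finset α := {a | ∀ a', f a' = f a → a' = a}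
  have hfiber : ∀ b, 2 ≤ #{a | f a = b} + if b ∈ U.image f then 1 else 0 := by
    intro b
    obtain ⟨a, rfl⟩ := hf b
    split_ifs with hb
    · have : 0 < #{a' | f a' = f a} := card_pos.2 ⟨a, by simp⟩
      omega
    · have ha : a ∉ U := fun ha => hb (mem_image_of_mem f ha)
      simp only [U, mem_filter, mem_univ, true_and, not_forall] at ha
      obtain ⟨a', ha', hne⟩ := ha
      have : 1 < #{a' | f a' = f a} := one_lt_card.2 ⟨a', by simpa, a, by simp, hne⟩
      omega
  simp only [Nat.card_eq_fintype_card, Fintype.card_subtype]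
  calc 2 * Fintype.card β = ∑ b, 2 := by rw [sum_const, card_univ, smul_eq_mul, Nat.mul_comm]
    _ ≤ ∑ b, (#{a | f a = b} + if b ∈ U.image f then 1 else 0) :=
      sum_le_sum fun b _ => hfiber b
    _ = Fintype.card α + #(U.image f) := by
      rw [sum_add_distrib,
        ← card_eq_sum_card_fiberwise (f := f) (s := univ) (by simp [Set.MapsTo]),
        sum_boole, filter_mem_eq_inter, univ_inter, card_univ, Nat.cast_id]
    _ ≤ Fintype.card α + #U := by grw [card_image_le]

namespace SimpleGraph

variable {V : Type*}

/-- For `F ≤ G`, this says that `K` is also a connected component of `G`. -/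
def ConnectedComponent.IsClosedIn {F : SimpleGraph V} (G : SimpleGraph V)
    (K : F.ConnectedComponent) : Prop :=
  ∀ ⦃a b⦄, a ∈ K.supp → G.Adj a b → b ∈ K.supp

theorem two_mul_card_connectedComponent_le [Finite V] {F G : SimpleGraph V} (h : F ≤ G) :
    2 * Nat.card G.ConnectedComponent ≤
      Nat.card F.ConnectedComponent + Nat.card {K : F.ConnectedComponent // K.IsClosedIn G} := by
  set φ := ConnectedComponent.map (Hom.ofLE h)
  have hφ : ∀ v, φ (F.connectedComponentMk v) = G.connectedComponentMk v := fun _ => rfl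
  have hclosed : ∀ K, (∀ K', φ K' = φ K → K' = K) → K.IsClosedIn G := by
    intro K hK a b ha hab
    rw [ConnectedComponent.mem_supp_iff] at ha ⊢
    refine hK _ ?_
    rw [← ha, hφ, hφ, ConnectedComponent.connectedComponentMk_eq_of_adj hab]
  refine (ConnectedComponent.surjective_map_ofLE h).two_mul_card_le.trans ?_
  gcongr
  exact Nat.card_le_card_of_injective (Subtype.impEmbedding _ _ hclosed)
    (Subtype.impEmbedding _ _ hclosed).injective

theorem card_connectedComponent_large_le_one [Fintype V] (G : SimpleGraph V) :
    Nat.card {K : G.ConnectedComponent // Fintype.card V < 2 * Nat.card K.supp} ≤ 1 := by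
  refine Finite.card_le_one_iff_subsingleton.2 ⟨fun ⟨K₁, h₁⟩ ⟨K₂, h₂⟩ => ?_⟩
  rw [Subtype.mk.injEq]
  by_contra hne
  have hdisj : Disjoint K₁.supp K₂.supp := G.pairwise_disjoint_supp_connectedComponent hne
  have := Set.ncard_union_eq hdisj
  have := Set.ncard_le_ncard (Set.subset_univ (K₁.supp ∪ K₂.supp))
  rw [Set.ncard_univ, Nat.card_eq_fintype_card] at this
  rw [Nat.card_coe_set_eq] at h₁ h₂
  omega

theorem two_mul_card_connectedComponent_le_add_one [Fintype V] {F G : SimpleGraph V}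
    (h : F ≤ G) :
    2 * Nat.card G.ConnectedComponent ≤ Nat.card F.ConnectedComponent +
      Nat.card {K : F.ConnectedComponent //
        2 * Nat.card K.supp ≤ Fintype.card V ∧ K.IsClosedIn G} + 1 := by
  classical
  have hsplit : Nat.card {K : F.ConnectedComponent // K.IsClosedIn G} ≤
      Nat.card {K : F.ConnectedComponent //
        2 * Nat.card K.supp ≤ Fintype.card V ∧ K.IsClosedIn G} +
      Nat.card {K : F.ConnectedComponent // Fintype.card V < 2 * Nat.card K.supp} := by
    have := Fintype.ofFinite F.ConnectedComponent
    simp only [Nat.card_eq_fintype_card, Fintype.card_subtype]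
    refine (card_le_card fun K hK => ?_).trans (card_union_le _ _)
    by_cases hK' : 2 * Nat.card K.supp ≤ Fintype.card V <;> simp_all
  linarith [two_mul_card_connectedComponent_le h, card_connectedComponent_large_le_one F]

theorem ceil_le_card_isClosedIn_of_lt [Fintype V] {F G : SimpleGraph V} (h : F ≤ G) {x : ℝ}
    (hx : 0.6 * Nat.card F.ConnectedComponent + x < Nat.card G.ConnectedComponent) :
    ⌈0.2 * Nat.card F.ConnectedComponent + 2 * x - 1⌉₊ ≤
      Nat.card {K : F.ConnectedComponent //
        2 * Nat.card K.supp ≤ Fintype.card V ∧ K.IsClosedIn G} := by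
  have hcount := two_mul_card_connectedComponent_le_add_one h
  generalize Nat.card {K : F.ConnectedComponent // _} = s at hcount ⊢
  rify at hcount
  exact Nat.ceil_le.2 (by linarith)

theorem card_connectedComponent_le_of_few_or_small [Fintype V] {F G : SimpleGraph V} (h : F ≤ G)
    {x : ℝ} (hx : 0 ≤ x)
    (hfew : Nat.card F.ConnectedComponent ≤ x ∨ 0.4 * Fintype.card V ≤ x) :
    Nat.card G.ConnectedComponent ≤ 0.6 * Nat.card F.ConnectedComponent + x := by
  have hGF := ConnectedComponent.card_le_card_of_le h
  have hF : Nat.card F.ConnectedComponent ≤ Fintype.card V :=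
    (Nat.card_le_card_of_surjective _ fun K => K.exists_rep).trans_eq Nat.card_eq_fintype_card
  rify at hGF hF
  rcases hfew with hfew | hfew <;> linarith

section EdgeBoundary

variable [Fintype V]

open Classical in
noncomputable def edgeBoundary (G : SimpleGraph V) (U : Set V) : Finset (Sym2 V) :=
  {e | e ∈ G.edgeSet ∧ ∃ a ∈ U, ∃ b ∉ U, e = s(a, b)}

lemma mem_edgeBoundary {G : SimpleGraph V} {U : Set V} {e : Sym2 V} :
    e ∈ G.edgeBoundary U ↔ e ∈ G.edgeSet ∧ ∃ a ∈ U, ∃ b ∉ U, e = s(a, b) := by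
  simp [edgeBoundary]

lemma card_crossPairs_le_card_edgeBoundary (G : SimpleGraph V) (U : Set V) :
    Nat.card (crossPairs G U) ≤ #(G.edgeBoundary U) := by
  let g : crossPairs G U → G.edgeBoundary U := fun p =>
    ⟨s(p.1.1, p.1.2), mem_edgeBoundary.2 ⟨p.2.2.2, _, p.2.1, _, p.2.2.1, rfl⟩⟩
  have hg : g.Injective := by
    rintro ⟨⟨a, b⟩, ha, hb, _⟩ ⟨⟨a', b'⟩, ha', hb', _⟩ h
    simp only [g, Subtype.mk.injEq, Sym2.eq_iff] at h
    rcases h with ⟨rfl, rfl⟩ | ⟨rfl, rfl⟩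
    · rfl
    · exact absurd ha' hb
  simpa using Nat.card_le_card_of_injective g hg

variable {F H : SimpleGraph V}

lemma ConnectedComponent.notMem_edgeSet_of_mem_edgeBoundary {K : F.ConnectedComponent}
    {e : Sym2 V} (he : e ∈ H.edgeBoundary K.supp) : e ∉ F.edgeSet := by
  obtain ⟨-, a, ha, b, hb, rfl⟩ := mem_edgeBoundary.1 he
  rw [ConnectedComponent.mem_supp_iff] at ha hb
  exact fun hab => hb (ConnectedComponent.connectedComponentMk_eq_of_adj hab ▸ ha)

lemma ConnectedComponent.IsClosedIn.eq_false_of_mem_edgeBoundary {K : F.ConnectedComponent}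
    {ω : Sym2 V → Bool} (hK : K.IsClosedIn (F ⊔ selectGraph (H.edgeSet \ F.edgeSet) ω))
    {e : Sym2 V} (he : e ∈ H.edgeBoundary K.supp) : ω e = false := by
  obtain ⟨hH, a, ha, b, hb, rfl⟩ := mem_edgeBoundary.1 he
  by_contra hω
  refine hb (hK ha (Or.inr ⟨hH.ne, ⟨hH, notMem_edgeSet_of_mem_edgeBoundary he⟩, ?_⟩))
  simpa using hω

open Classical in
lemma card_mul_le_two_mul_card_biUnion_edgeBoundary (S : Finset F.ConnectedComponent) {q : ℕ}
    (hq : ∀ K ∈ S, q ≤ #(H.edgeBoundary K.supp)) :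
    #S * q ≤ 2 * #(S.biUnion fun K => H.edgeBoundary K.supp) := by
  rw [Nat.mul_comm 2]
  refine card_mul_le_card_mul (fun K e => e ∈ H.edgeBoundary K.supp) (fun K hK => ?_) ?_
  · refine (hq K hK).trans (card_le_card fun e he => ?_)
    exact (mem_bipartiteAbove _).2 ⟨mem_biUnion.2 ⟨K, hK, he⟩, he⟩
  · intro e he
    obtain ⟨K₀, -, he₀⟩ := mem_biUnion.1 he
    obtain ⟨-, a, -, b, -, rfl⟩ := mem_edgeBoundary.1 he₀
    refine (card_le_card (t := {F.connectedComponentMk a, F.connectedComponentMk b})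
      fun K hK => ?_).trans (card_insert_le _ _)
    obtain ⟨-, hK⟩ := (mem_bipartiteBelow _).1 hK
    obtain ⟨-, c, hc, d, -, hcd⟩ := mem_edgeBoundary.1 hK
    rw [ConnectedComponent.mem_supp_iff] at hc
    have : c = a ∨ c = b := Sym2.mem_iff.1 (hcd ▸ Sym2.mem_mk_left c d)
    rcases this with rfl | rfl <;> simp [hc]

end EdgeBoundary

end SimpleGraph

open SimpleGraph in
lemma IsRobust.half_mul_le_card_edgeBoundary {V : Type*} [Fintype V] {α : ℝ}
    {H : SimpleGraph V} (hrob : IsRobust α H) (hα : 0 ≤ α) {U : Set V} (hU : U.Nonempty)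
    (hUn : 2 * Nat.card U ≤ Fintype.card V) :
    α * Fintype.card V / 2 ≤ #(H.edgeBoundary U) := by
  have h1 : (1 : ℝ) ≤ Nat.card U := by
    have := hU.to_subtype
    exact_mod_cast Nat.card_pos
  have h2 : 2 * (Nat.card U : ℝ) ≤ Fintype.card V := by exact_mod_cast hUn
  calc α * Fintype.card V / 2 ≤ α * Nat.card U * (Fintype.card V - Nat.card U) := by
        nlinarith [mul_le_mul_of_nonneg_left h1 hα]
    _ ≤ Nat.card (crossPairs H U) := hrob U
    _ ≤ #(H.edgeBoundary U) := by exact_mod_cast card_crossPairs_le_card_edgeBoundary H U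

section Percolation

variable {ι : Type*} {p : ℝ}

lemma bernoulliMeasure_singleton_false (p : ℝ) :
    bernoulliMeasure p {false} = 1 - ENNReal.ofReal p := by
  simp [bernoulliMeasure]

lemma isProbabilityMeasure_bernoulliMeasure (hp : p ≤ 1) :
    IsProbabilityMeasure (bernoulliMeasure p) :=
  ⟨by simpa [bernoulliMeasure] using add_tsub_cancel_of_le (ENNReal.ofReal_le_one.2 hp)⟩

noncomputable def percolationMeasure [Fintype ι] (S : Set ι) [DecidablePred (· ∈ S)]
    (p : ℝ) :
    Measure (ι → Bool) :=
  Measure.pi fun i => if i ∈ S then bernoulliMeasure p else Measure.dirac false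

variable {S : Set ι} [DecidablePred (· ∈ S)]

lemma isProbabilityMeasure_percolationMeasure_factor (hp : p ≤ 1) (i : ι) :
    IsProbabilityMeasure (if i ∈ S then bernoulliMeasure p else Measure.dirac false) := by
  split_ifs
  exacts [isProbabilityMeasure_bernoulliMeasure hp, inferInstance]

variable [Fintype ι]

lemma isProbabilityMeasure_percolationMeasure (hp : p ≤ 1) :
    IsProbabilityMeasure (percolationMeasure S p) :=
  have := isProbabilityMeasure_percolationMeasure_factor (S := S) hp
  Measure.pi.instIsProbabilityMeasure _

lemma percolationMeasure_forall_eq_false {E : Finset ι} (hE : ↑E ⊆ S) (hp : p ≤ 1) :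
    percolationMeasure S p {ω | ∀ i ∈ E, ω i = false} = (1 - ENNReal.ofReal p) ^ #E := by
  have := isProbabilityMeasure_percolationMeasure_factor (S := S) hp
  have hset : {ω : ι → Bool | ∀ i ∈ E, ω i = false} = (E : Set ι).pi fun _ => {false} :=
    Set.ext fun ω => by simp
  rw [percolationMeasure, hset, Measure.pi_pi_finset, prod_congr rfl fun i hi => ?_,
    prod_const]
  rw [if_pos (hE hi), bernoulliMeasure_singleton_false]

lemma percolationMeasure_forall_eq_false_le {E : Finset ι} (hE : ↑E ⊆ S) (hp0 : 0 ≤ p)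
    (hp1 : p ≤ 1) :
    percolationMeasure S p {ω | ∀ i ∈ E, ω i = false} ≤
      ENNReal.ofReal (Real.exp (-(p * #E))) := by
  rw [percolationMeasure_forall_eq_false hE hp1, ← ENNReal.ofReal_one,
    ← ENNReal.ofReal_sub _ hp0, ← ENNReal.ofReal_pow (by linarith),
    show -(p * #E) = #E * -p by ring, Real.exp_nat_mul]
  gcongr
  exact Real.one_sub_le_exp_neg p

end Percolation

open Classical SimpleGraph in
lemma IsRobust.mul_card_le_four_mul_card_biUnion_edgeBoundary {V : Type*} [Fintype V] {α : ℝ}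
    {F H : SimpleGraph V} (hrob : IsRobust α H) (hα : 0 ≤ α) (S : Finset F.ConnectedComponent)
    (hS : ∀ K ∈ S, 2 * Nat.card K.supp ≤ Fintype.card V) :
    α * Fintype.card V * #S ≤ 4 * #(S.biUnion fun K => H.edgeBoundary K.supp) := by
  set q := ⌈α * Fintype.card V / 2⌉₊
  have hq : ∀ K ∈ S, q ≤ #(H.edgeBoundary K.supp) := fun K hK =>
    Nat.ceil_le.2 (hrob.half_mul_le_card_edgeBoundary hα K.nonempty_supp (hS K hK))
  have hcount : (#S * q : ℝ) ≤ 2 * #(S.biUnion fun K => H.edgeBoundary K.supp) := by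
    exact_mod_cast card_mul_le_two_mul_card_biUnion_edgeBoundary S hq
  nlinarith [Nat.le_ceil (α * Fintype.card V / 2), (Nat.cast_nonneg #S : (0 : ℝ) ≤ #S)]

open Classical SimpleGraph in
lemma IsRobust.percolationMeasure_forall_edgeBoundary_eq_false_le {V : Type*} [Fintype V]
    {α p : ℝ} {F H : SimpleGraph V} (hrob : IsRobust α H) (hα : 0 ≤ α) (hp0 : 0 ≤ p)
    (hp1 : p ≤ 1) (S : Finset F.ConnectedComponent)
    (hS : ∀ K ∈ S, 2 * Nat.card K.supp ≤ Fintype.card V) :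
    percolationMeasure (H.edgeSet \ F.edgeSet) p
        {ω | ∀ e ∈ S.biUnion fun K => H.edgeBoundary K.supp, ω e = false} ≤
      ENNReal.ofReal (Real.exp (-(p * α * Fintype.card V / 4 * #S))) := by
  refine (percolationMeasure_forall_eq_false_le (fun e he => ?_) hp0 hp1).trans
    (ENNReal.ofReal_le_ofReal (Real.exp_le_exp.2 ?_))
  · obtain ⟨K, -, he⟩ := mem_biUnion.1 he
    exact ⟨(mem_edgeBoundary.1 he).1, K.notMem_edgeSet_of_mem_edgeBoundary he⟩
  · nlinarith [hrob.mul_card_le_four_mul_card_biUnion_edgeBoundary hα S hS]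

open Classical SimpleGraph in
theorem IsRobust.percolationMeasure_le {V : Type*} [Fintype V] {α p : ℝ} {F H : SimpleGraph V}
    (hrob : IsRobust α H) (hα : 0 ≤ α) (hp0 : 0 ≤ p) (hp1 : p ≤ 1) (t : ℕ) :
    percolationMeasure (H.edgeSet \ F.edgeSet) p
        {ω | t ≤ Nat.card {K : F.ConnectedComponent // 2 * Nat.card K.supp ≤ Fintype.card V ∧
          K.IsClosedIn (F ⊔ selectGraph (H.edgeSet \ F.edgeSet) ω)}} ≤
      ENNReal.ofReal ((Nat.card F.ConnectedComponent).choose t *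
        Real.exp (-(p * α * Fintype.card V / 4 * t))) := by
  set small : Finset F.ConnectedComponent := {K | 2 * Nat.card K.supp ≤ Fintype.card V}
  set E := fun S : Finset F.ConnectedComponent => S.biUnion fun K => H.edgeBoundary K.supp
  have hsub : {ω | t ≤ Nat.card {K : F.ConnectedComponent // 2 * Nat.card K.supp ≤
        Fintype.card V ∧ K.IsClosedIn (F ⊔ selectGraph (H.edgeSet \ F.edgeSet) ω)}} ⊆
      ⋃ S ∈ small.powersetCard t, {ω | ∀ e ∈ E S, ω e = false} := by
    intro ω hω
    have hω' : t ≤ #({K : F.ConnectedComponent | 2 * Nat.card K.supp ≤ Fintype.card V ∧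
        K.IsClosedIn (F ⊔ selectGraph (H.edgeSet \ F.edgeSet) ω)}) := by
      rwa [← Fintype.card_subtype, ← Nat.card_eq_fintype_card]
    obtain ⟨S, hS, rfl⟩ := exists_subset_card_eq hω'
    refine Set.mem_biUnion (mem_powersetCard.2 ⟨fun K hK => ?_, rfl⟩) fun e he => ?_
    · exact mem_filter.2 ⟨mem_univ K, (mem_filter.1 (hS hK)).2.1⟩
    · obtain ⟨K, hK, he⟩ := mem_biUnion.1 he
      exact (mem_filter.1 (hS hK)).2.2.eq_false_of_mem_edgeBoundary he
  calc _ ≤ percolationMeasure (H.edgeSet \ F.edgeSet) p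
        (⋃ S ∈ small.powersetCard t, {ω | ∀ e ∈ E S, ω e = false}) := measure_mono hsub
    _ ≤ ∑ S ∈ small.powersetCard t,
        percolationMeasure (H.edgeSet \ F.edgeSet) p {ω | ∀ e ∈ E S, ω e = false} :=
      measure_biUnion_finset_le _ _
    _ ≤ ∑ S ∈ small.powersetCard t,
        ENNReal.ofReal (Real.exp (-(p * α * Fintype.card V / 4 * t))) := by
      refine sum_le_sum fun S hS => ?_
      obtain ⟨hSs, rfl⟩ := mem_powersetCard.1 hS
      exact hrob.percolationMeasure_forall_edgeBoundary_eq_false_le hα hp0 hp1 S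
        fun K hK => (mem_filter.1 (hSs hK)).2
    _ ≤ _ := by
      rw [sum_const, card_powersetCard, nsmul_eq_mul, ← ENNReal.ofReal_natCast,
        ← ENNReal.ofReal_mul (by positivity), Nat.card_eq_fintype_card]
      gcongr
      exact (card_filter_le _ _).trans_eq card_univ

section Estimates

open Real

lemma Nat.choose_le_exp_mul_div_pow (n k : ℕ) : (n.choose k : ℝ) ≤ (exp 1 * n / k) ^ k := by
  rcases k.eq_zero_or_pos with rfl | hk
  · simp
  have hk' : (0 : ℝ) < k := by exact_mod_cast hk
  calc (n.choose k : ℝ) ≤ (n : ℝ) ^ k / k.factorial := Nat.choose_le_pow_div k n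
    _ = ((n : ℝ) / k) ^ k * ((k : ℝ) ^ k / k.factorial) := by
      rw [div_pow]; field_simp
    _ ≤ ((n : ℝ) / k) ^ k * exp k := by
      gcongr; exact pow_div_factorial_le_exp _ hk'.le k
    _ = (exp 1 * n / k) ^ k := by
      rw [← exp_one_pow, mul_div_assoc, mul_pow, mul_comm]

lemma twenty_mul_log_le_mul_two_sub_log_five {u t : ℝ} (hu : 2.5 ≤ u)
    (ht : 2.2 * u ^ 4 - 1 ≤ t) : 20 * log u ≤ t * (2 - log 5) := by
  have hlog5 : log 5 < 1.637 := by
    have h54 : log (5 / 4) ≤ 5 / 4 - 1 := log_le_sub_one_of_pos (by norm_num)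
    have h4 : log 4 = 2 * log 2 := by
      rw [show (4 : ℝ) = 2 ^ 2 by norm_num, log_pow]; norm_num
    have : log 5 = log 4 + log (5 / 4) := by
      rw [← log_mul (by norm_num) (by norm_num)]; norm_num
    linarith [log_two_lt_d9]
  have hv : 0 ≤ u - 2.5 := by linarith
  have hpoly : 20 * (u - 1) ≤ (2.2 * u ^ 4 - 1) * 0.363 := by
    nlinarith [mul_nonneg hv hv, mul_nonneg (mul_nonneg hv hv) hv,
      mul_nonneg (mul_nonneg hv hv) (mul_nonneg hv hv)]
  nlinarith [log_le_sub_one_of_pos (by linarith : 0 < u)]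

lemma choose_mul_exp_le_inv_pow_four {n c t : ℕ} (hn : (n : ℝ) ^ ((4 : ℝ) / 5) < 0.4 * n)
    (hc : (n : ℝ) ^ ((4 : ℝ) / 5) < c)
    (ht : 0.2 * c + 2 * (n : ℝ) ^ ((4 : ℝ) / 5) - 1 ≤ t) :
    (c.choose t : ℝ) * exp (-(3 * t)) ≤ ((n : ℝ) ^ 4)⁻¹ := by
  have hn0 : (0 : ℝ) < n := by
    linarith [rpow_nonneg (Nat.cast_nonneg n) ((4 : ℝ) / 5)]
  set u := (n : ℝ) ^ ((1 : ℝ) / 5)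
  have hu_pow : ∀ k : ℕ, u ^ k = (n : ℝ) ^ ((k : ℝ) / 5) := fun k => by
    rw [← rpow_natCast, ← rpow_mul hn0.le]; ring_nf
  have hu5 : u ^ 5 = n := by rw [hu_pow]; norm_num
  have hu4 : u ^ 4 = (n : ℝ) ^ ((4 : ℝ) / 5) := by rw [hu_pow]; norm_num
  have hu0 : 0 < u := rpow_pos_of_pos hn0 _
  rw [← hu4] at hn hc ht
  rw [← hu5] at hn
  have hu : 2.5 ≤ u := by nlinarith [pow_pos hu0 4]
  have hu4_ge : 39 ≤ u ^ 4 := by nlinarith [pow_le_pow_left₀ (by norm_num) hu 4]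
  have ht0 : (0 : ℝ) < t := by linarith
  have hct : (c : ℝ) / t ≤ 5 := by rw [div_le_iff₀ ht0]; linarith
  calc (c.choose t : ℝ) * exp (-(3 * t))
      ≤ (exp 1 * c / t) ^ t * exp (-(3 * t)) := by gcongr; exact Nat.choose_le_exp_mul_div_pow c t
    _ ≤ (exp 1 * 5) ^ t * exp (-(3 * t)) := by rw [mul_div_assoc]; gcongr
    _ = exp (-(t * (2 - log 5))) := by
      rw [show exp 1 * 5 = exp (1 + log 5) by rw [exp_add, exp_log (by norm_num)],
        ← exp_nat_mul, ← exp_add]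
      ring_nf
    _ ≤ exp (-(20 * log u)) :=
      exp_le_exp.2 <| neg_le_neg <| twenty_mul_log_le_mul_two_sub_log_five hu (by linarith)
    _ = ((n : ℝ) ^ 4)⁻¹ := by
      rw [exp_neg, show 20 * log u = log (u ^ 20) by rw [log_pow]; norm_num,
        exp_log (by positivity), ← hu5, ← pow_mul]

end Estimates

open Classical in
theorem component_count_drop_general {V : Type*} [Fintype V]
    (α : ℝ) (hα : 0 < α) (F H : SimpleGraph V)
    (hn : 500 / α < (Fintype.card V : ℝ)) (hrob : IsRobust α H) :
    1 - ((Fintype.card V : ENNReal) ^ 4)⁻¹ ≤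
      (Measure.pi (fun e : Sym2 V =>
          if e ∈ H.edgeSet \ F.edgeSet
          then bernoulliMeasure (12 / (α * (Fintype.card V : ℝ)))
          else Measure.dirac false))
        {ω : Sym2 V → Bool |
          (Nat.card (F ⊔ selectGraph (H.edgeSet \ F.edgeSet) ω).ConnectedComponent : ℝ)
            ≤ 0.6 * (Nat.card F.ConnectedComponent : ℝ)
              + (Fintype.card V : ℝ) ^ ((4 : ℝ) / 5)} := by
  set c := Nat.card F.ConnectedComponent
  have hn0 : (0 : ℝ) < Fintype.card V := (div_pos (by norm_num) hα).trans hn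
  have hpαn : 12 / (α * Fintype.card V) * α * Fintype.card V / 4 = 3 := by field_simp; norm_num
  set p := 12 / (α * Fintype.card V)
  have hp1 : p ≤ 1 := by
    rw [div_lt_iff₀ hα] at hn
    exact (div_le_one (by positivity)).2 (by linarith)
  have := isProbabilityMeasure_percolationMeasure (S := H.edgeSet \ F.edgeSet) hp1
  show _ ≤ percolationMeasure (H.edgeSet \ F.edgeSet) p _
  rw [tsub_le_iff_right, ← measure_univ (μ := percolationMeasure (H.edgeSet \ F.edgeSet) p)]
  refine (measure_univ_le_add_compl _).trans (add_le_add le_rfl ?_)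
  by_cases hfew : (c : ℝ) ≤ (Fintype.card V : ℝ) ^ ((4 : ℝ) / 5) ∨
      0.4 * (Fintype.card V : ℝ) ≤ (Fintype.card V : ℝ) ^ ((4 : ℝ) / 5)
  · refine (measure_mono (t := ∅) fun ω hω => ?_).trans (by simp)
    exact hω <| SimpleGraph.card_connectedComponent_le_of_few_or_small le_sup_left
      (by positivity) hfew
  simp only [not_or, not_le] at hfew
  set t := ⌈0.2 * c + 2 * (Fintype.card V : ℝ) ^ ((4 : ℝ) / 5) - 1⌉₊
  calc _ ≤ _ := measure_mono fun ω hω =>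
        SimpleGraph.ceil_le_card_isClosedIn_of_lt le_sup_left (not_le.1 hω)
    _ ≤ _ := hrob.percolationMeasure_le hα.le (by positivity) hp1 t
    _ ≤ ENNReal.ofReal ((Fintype.card V ^ 4 : ℝ)⁻¹) := by
      rw [hpαn]
      exact ENNReal.ofReal_le_ofReal (choose_mul_exp_le_inv_pow_four hfew.2 hfew.1 (Nat.le_ceil _))
    _ = _ := by
      rw [ENNReal.ofReal_inv_of_pos (by positivity), ENNReal.ofReal_pow (by positivity),
        ENNReal.ofReal_natCast]

open Classical in
/-- Let `F` and `H` be graphs on the same vertex set of size `n > 500/α`, with `H`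
`α`-robust.  Add to `F` each edge of `E(H) ∖ E(F)` independently with probability
`12/(αn)`, obtaining `F'`.  Then with probability at least `1 − n⁻⁴` we have
`cc(F') ≤ 0.6·cc(F) + n^{4/5}`. -/
theorem component_count_drop {V : Type*} [Fintype V] [DecidableEq V]
    (α : ℝ) (hα : 0 < α) (F H : SimpleGraph V)
    (hn : 500 / α < (Fintype.card V : ℝ)) (hrob : IsRobust α H) :
    1 - ((Fintype.card V : ENNReal) ^ 4)⁻¹ ≤
      (Measure.pi (fun e : Sym2 V =>
          if e ∈ H.edgeSet \ F.edgeSet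
          then bernoulliMeasure (12 / (α * (Fintype.card V : ℝ)))
          else Measure.dirac false))
        {ω : Sym2 V → Bool |
          (Nat.card (F ⊔ selectGraph (H.edgeSet \ F.edgeSet) ω).ConnectedComponent : ℝ)
            ≤ 0.6 * (Nat.card F.ConnectedComponent : ℝ)
              + (Fintype.card V : ℝ) ^ ((4 : ℝ) / 5)} :=
  component_count_drop_general α hα F H hn hrob
end
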